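/- Let T and S be 2-uniform tolerances on a poset P (|P| > 2) with no infinite ascending chains. For a ≺ c ≺ b with (a,c) ∈ T and (c,b) ∈ S, define a₀ = a, a₁ = c, a₂ = b, and for i ≥ 3 let aᵢ be the unique upper T-neighbor of a_{i-1} if i is odd and a_{i-1} is a T-bottom, and the unique upper S-neighbor of a_{i-1} if i is even and a_{i-1} is an S-bottom (undefined otherwise). Then there exists n ≥ 2 such that a₂,…,aₙ are defined but a_{n+1} is not, and this aₙ is a (T,S)-top. -/
import Mathlib

set_option linter.unusedSectionVars false
set_option linter.unusedVariables false

variable {P : Type*} [PartialOrder P]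

/-- A tolerance on a poset: reflexive, symmetric, compatible with existing binary
joins and meets, and satisfying the two interpolation conditions (3) and (4). -/
def PosetTolerance (T : P → P → Prop) : Prop :=
  (∀ x, T x x) ∧ (∀ x y, T x y → T y x) ∧
  (∀ ⦃x y z u j k : P⦄, T x y → T z u → IsLUB {x, z} j → IsLUB {y, u} k → T j k) ∧
  (∀ ⦃x y z u j k : P⦄, T x y → T z u → IsGLB {x, z} j → IsGLB {y, u} k → T j k) ∧
  ((∃ a b, ¬ T a b) → ∀ ⦃x y z : P⦄, T x y → T y z →
    ∃ u v, u ≤ x ∧ u ≤ y ∧ u ≤ z ∧ x ≤ v ∧ y ≤ v ∧ z ≤ v ∧ T u y ∧ T y v) ∧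
  ((∃ a b, ¬ T a b) → ∀ ⦃x y : P⦄, T x y →
    ∃ z u, T z u ∧ z ≤ x ∧ z ≤ y ∧ x ≤ u ∧ y ≤ u ∧
      ∀ v, T v x → T v y → T v z ∧ T v u)

/-- A block of `T`: a maximal subset `B` with `B × B ⊆ T`. -/
def IsBlock (T : P → P → Prop) (B : Set P) : Prop :=
  (∀ x ∈ B, ∀ y ∈ B, T x y) ∧ ∀ C : Set P, B ⊆ C → (∀ x ∈ C, ∀ y ∈ C, T x y) → C = B

/-- A 2-uniform tolerance: a tolerance all of whose blocks have exactly two elements. -/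
def TwoUniform (T : P → P → Prop) : Prop :=
  PosetTolerance T ∧ ∀ B : Set P, IsBlock T B → ∃ a b : P, a ≠ b ∧ B = {a, b}

/-- `a` is a lower `T`-neighbor of `b` (and `b` an upper `T`-neighbor of `a`). -/
def LowerNbr (T : P → P → Prop) (a b : P) : Prop := a ⋖ b ∧ T a b

/-- A `(T,S)`-top: an element with a lower `T`-neighbor and a lower `S`-neighbor
(equivalently, split or adherent `(T,S)`-top). -/
def TSTop (T S : P → P → Prop) (a : P) : Prop :=
  (∃ b, LowerNbr T b a) ∧ ∃ c, LowerNbr S c a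

/-- A `(T,S)`-bottom, dually. -/
def TSBottom (T S : P → P → Prop) (a : P) : Prop :=
  (∃ b, LowerNbr T a b) ∧ ∃ c, LowerNbr S a c

/-- `T` and `S` permute: `T ∘ S = S ∘ T`. -/
def Permute (T S : P → P → Prop) : Prop :=
  ∀ a b : P, (∃ c, T a c ∧ S c b) ↔ (∃ c, S a c ∧ T c b)

/-- Conditions (5)–(8): `T` and `S` are amicable. -/
def Amicable (T S : P → P → Prop) : Prop :=
  (∀ a b : P, a ≠ b → (∃ c, LowerNbr T c a ∧ LowerNbr S c b) →
    ∃ d, LowerNbr S a d ∧ LowerNbr T b d) ∧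
  (∀ a b : P, a ≠ b → (∃ c, LowerNbr T a c ∧ LowerNbr S b c) →
    ∃ d, LowerNbr S d a ∧ LowerNbr T d b) ∧
  (∀ a b : P, TSTop T S a → (LowerNbr T a b ∨ LowerNbr S a b) → TSTop T S b) ∧
  (∀ a b : P, TSBottom T S a → (LowerNbr T b a ∨ LowerNbr S b a) → TSBottom T S b)

lemma exists_block_superset (T : P → P → Prop) (A : Set P)
    (hA : ∀ x ∈ A, ∀ y ∈ A, T x y) (hne : A.Nonempty) :
    ∃ B, A ⊆ B ∧ IsBlock T B := by
  obtain ⟨m, hAm, hm⟩ := zorn_subset_nonempty {C : Set P | ∀ x ∈ C, ∀ y ∈ C, T x y}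
    (fun c hc hchain hcne => by
      refine ⟨⋃₀ c, ?_, fun s hs => Set.subset_sUnion_of_mem hs⟩
      rintro x ⟨s, hs, hxs⟩ y ⟨t, ht, hyt⟩
      rcases hchain.total hs ht with h | h
      · exact hc ht x (h hxs) y hyt
      · exact hc hs x hxs y (h hyt)) A hA
  exact ⟨m, hAm, hm.1, fun C hmC hC => le_antisymm (hm.2 hC hmC) hmC⟩

lemma clique3 {T : P → P → Prop} (hrefl : ∀ x, T x x) (hsymm : ∀ x y, T x y → T y x)
    {x y z : P} (hxy : T x y) (hxz : T x z) (hyz : T y z) :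
    ∀ u ∈ ({x, y, z} : Set P), ∀ v ∈ ({x, y, z} : Set P), T u v := by
  intro u hu v hv
  simp only [Set.mem_insert_iff, Set.mem_singleton_iff] at hu hv
  rcases hu with hu | hu | hu <;> rcases hv with hv | hv | hv <;> rw [hu, hv]
  exacts [hrefl x, hxy, hxz, hsymm x y hxy, hrefl y, hyz, hsymm x z hxz,
    hsymm y z hyz, hrefl z]

lemma no_three_clique {T : P → P → Prop} (hT : TwoUniform T) {x y z : P}
    (hxy : x ≠ y) (hxz : x ≠ z) (hyz : y ≠ z)
    (h : ∀ u ∈ ({x, y, z} : Set P), ∀ v ∈ ({x, y, z} : Set P), T u v) : False := by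
  obtain ⟨B, hsub, hB⟩ := exists_block_superset T _ h ⟨x, by simp⟩
  obtain ⟨p, q, hpq, rfl⟩ := hT.2 B hB
  have hx := hsub (show x ∈ ({x,y,z} : Set P) by simp)
  have hy := hsub (show y ∈ ({x,y,z} : Set P) by simp)
  have hz := hsub (show z ∈ ({x,y,z} : Set P) by simp)
  simp only [Set.mem_insert_iff, Set.mem_singleton_iff] at hx hy hz
  rcases hx with rfl | rfl <;> rcases hy with rfl | rfl <;> rcases hz with rfl | rfl <;>
    simp_all

lemma not_total {T : P → P → Prop} (hT : TwoUniform T)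
    (hP : ∃ x y z : P, x ≠ y ∧ x ≠ z ∧ y ≠ z) : ∃ a b, ¬ T a b := by
  by_contra h
  push_neg at h
  obtain ⟨x, y, z, hxy, hxz, hyz⟩ := hP
  exact no_three_clique hT hxy hxz hyz (fun u _ v _ => h u v)

private lemma isLUB_pair_le {x w : P} (h : x ≤ w) : IsLUB ({x, w} : Set P) w :=
  ⟨by rintro t (rfl | rfl); exacts [h, le_rfl],
   fun b hb => hb (by simp : w ∈ ({x, w} : Set P))⟩

private lemma isLUB_pair_ge {x w : P} (h : w ≤ x) : IsLUB ({x, w} : Set P) x :=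
  ⟨by rintro t (rfl | rfl); exacts [le_rfl, h],
   fun b hb => hb (by simp : x ∈ ({x, w} : Set P))⟩

private lemma isGLB_pair_le {x w : P} (h : x ≤ w) : IsGLB ({x, w} : Set P) x :=
  ⟨by rintro t (rfl | rfl); exacts [le_rfl, h],
   fun b hb => hb (by simp : x ∈ ({x, w} : Set P))⟩

private lemma isGLB_pair_ge {x w : P} (h : w ≤ x) : IsGLB ({x, w} : Set P) w :=
  ⟨by rintro t (rfl | rfl); exacts [h, le_rfl],
   fun b hb => hb (by simp : w ∈ ({x, w} : Set P))⟩

lemma covby_of_rel {T : P → P → Prop} (hT : TwoUniform T)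
    (hP : ∃ x y z : P, x ≠ y ∧ x ≠ z ∧ y ≠ z) {x y : P}
    (hxy : T x y) (hne : x ≠ y) : x ⋖ y ∨ y ⋖ x := by
  obtain ⟨hrefl, hsymm, hlub, hglb, _, h6⟩ := hT.1
  have hnt := not_total hT hP
  obtain ⟨z, u, hzu, hzx, hzy, hxu, hyu, hv⟩ := h6 hnt hxy
  have hxz : T x z := (hv x (hrefl x) hxy).1
  have hyz : T y z := (hv y (hsymm x y hxy) (hrefl y)).1
  have hcomp : x ≤ y ∨ y ≤ x := by
    by_cases hzx' : z = x
    · exact Or.inl (hzx' ▸ hzy)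
    by_cases hzy' : z = y
    · exact Or.inr (hzy' ▸ hzx)
    exact absurd (clique3 hrefl hsymm hxy hxz hyz)
      (fun h => no_three_clique hT hne (Ne.symm hzx') (Ne.symm hzy') h)
  have key : ∀ p q : P, T p q → p < q → p ⋖ q := by
    intro p q hpq hlt
    refine ⟨hlt, fun w hpw hwq => ?_⟩
    have hTwq : T w q := hlub hpq (hrefl w) (isLUB_pair_le hpw.le) (isLUB_pair_ge hwq.le)
    have hTpw : T p w := hglb hpq (hrefl w) (isGLB_pair_le hpw.le) (isGLB_pair_ge hwq.le)
    exact no_three_clique hT hpw.ne hlt.ne hwq.ne (clique3 hrefl hsymm hTpw hpq hTwq)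
  rcases hcomp with h | h
  · exact Or.inl (key x y hxy (lt_of_le_of_ne h hne))
  · exact Or.inr (key y x (hsymm x y hxy) (lt_of_le_of_ne h (Ne.symm hne)))

lemma exists_nbr {T : P → P → Prop} (hT : TwoUniform T)
    (hP : ∃ x y z : P, x ≠ y ∧ x ≠ z ∧ y ≠ z) (x : P) :
    (∃ d, LowerNbr T x d) ∨ (∃ d, LowerNbr T d x) := by
  obtain ⟨B, hsub, hB⟩ := exists_block_superset T {x} (by
    rintro u rfl v rfl; exact hT.1.1 _) ⟨x, rfl⟩
  obtain ⟨p, q, hpq, rfl⟩ := hT.2 B hB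
  have hx : x = p ∨ x = q := hsub rfl
  have hy : ∃ y, y ≠ x ∧ T x y := by
    rcases hx with rfl | rfl
    · exact ⟨q, Ne.symm hpq, hB.1 x (by simp) q (by simp)⟩
    · exact ⟨p, hpq, hB.1 x (by simp) p (by simp)⟩
  obtain ⟨y, hne, hxy⟩ := hy
  rcases covby_of_rel hT hP hxy hne.symm with h | h
  · exact Or.inl ⟨y, h, hxy⟩
  · exact Or.inr ⟨y, h, hT.1.2.1 x y hxy⟩

open Classical in
noncomputable def seqF (T S : P → P → Prop) (a c b : P) : ℕ → P
  | 0 => a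
  | 1 => c
  | 2 => b
  | (i+3) =>
    let p := seqF T S a c b (i+2)
    if Odd (i+3) then
      (if h : ∃ d, LowerNbr T p d then h.choose else p)
    else
      (if h : ∃ d, LowerNbr S p d then h.choose else p)

open Classical in
lemma seqF_succ (T S : P → P → Prop) (a c b : P) (i : ℕ) :
    seqF T S a c b (i+3) =
    (if Odd (i+3) then
      (if h : ∃ d, LowerNbr T (seqF T S a c b (i+2)) d then h.choose else seqF T S a c b (i+2))
    else
      (if h : ∃ d, LowerNbr S (seqF T S a c b (i+2)) d then h.choose else seqF T S a c b (i+2))) :=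
  rfl

/-- The ascending sequence `a₀ = a ≺ a₁ = c ≺ a₂ = b ≺ a₃ ≺ ⋯` built by alternately
taking the unique upper `T`-neighbor (odd steps) and upper `S`-neighbor (even steps)
terminates at some `aₙ` (`n ≥ 2`), and this `aₙ` is a `(T,S)`-top. -/
theorem stmt_15 {P : Type*} [PartialOrder P] (T S : P → P → Prop)
    (hP : ∃ x y z : P, x ≠ y ∧ x ≠ z ∧ y ≠ z)
    (hchain : ∀ C : Set P, IsChain (· ≤ ·) C → C.Finite)
    (hT : TwoUniform T) (hS : TwoUniform S)
    (a c b : P) (hac : a ⋖ c) (hcb : c ⋖ b) (hTac : T a c) (hScb : S c b) :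
    ∃ n : ℕ, 2 ≤ n ∧ ∃ f : ℕ → P, f 0 = a ∧ f 1 = c ∧ f 2 = b ∧
      (∀ i : ℕ, 3 ≤ i → i ≤ n →
        (Odd i → LowerNbr T (f (i - 1)) (f i)) ∧
        (Even i → LowerNbr S (f (i - 1)) (f i))) ∧
      (Odd (n + 1) → ¬ ∃ d, LowerNbr T (f n) d) ∧
      (Even (n + 1) → ¬ ∃ d, LowerNbr S (f n) d) ∧
      TSTop T S (f n) := by
  classical
  set f : ℕ → P := seqF T S a c b with hf
  set Good : ℕ → Prop := fun i =>
    (Odd i ∧ ∃ d, LowerNbr T (f (i - 1)) d) ∨ (¬ Odd i ∧ ∃ d, LowerNbr S (f (i - 1)) d)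
    with hGood
  -- step lemma
  have step : ∀ i : ℕ, Good (i + 3) →
      (Odd (i + 3) → LowerNbr T (f (i + 2)) (f (i + 3))) ∧
      (¬ Odd (i + 3) → LowerNbr S (f (i + 2)) (f (i + 3))) := by
    intro i hg
    have h2 : (i + 3) - 1 = i + 2 := rfl
    rcases hg with ⟨hodd, hex⟩ | ⟨heven, hex⟩
    · rw [h2] at hex
      refine ⟨fun _ => ?_, fun h => absurd hodd h⟩
      rw [hf] at hex ⊢
      rw [seqF_succ, if_pos hodd, dif_pos hex]
      exact hex.choose_spec
    · rw [h2] at hex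
      refine ⟨fun h => absurd h heven, fun _ => ?_⟩
      rw [hf] at hex ⊢
      rw [seqF_succ, if_neg heven, dif_pos hex]
      exact hex.choose_spec
  have cov : ∀ i : ℕ, Good (i + 3) → f (i + 2) ⋖ f (i + 3) := by
    intro i hg
    rcases Nat.even_or_odd (i + 3) with h | h
    · exact ((step i hg).2 (Nat.not_odd_iff_even.mpr h)).1
    · exact ((step i hg).1 h).1
  -- termination
  have hterm : ∃ n : ℕ, 2 ≤ n ∧ ¬ Good (n + 1) := by
    by_contra h
    push_neg at h
    have hgood : ∀ k : ℕ, Good (k + 3) := fun k => h (k + 2) (by omega)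
    have hmono : StrictMono (fun k : ℕ => f (k + 2)) := by
      apply strictMono_nat_of_lt_succ
      intro k
      exact (cov k (hgood k)).lt
    have hfin := hchain (Set.range (fun k : ℕ => f (k + 2)))
      (by
        rintro _ ⟨i, rfl⟩ _ ⟨j, rfl⟩ _
        rcases le_total i j with h' | h'
        · exact Or.inl (hmono.monotone h')
        · exact Or.inr (hmono.monotone h'))
    exact (Set.infinite_range_of_injective hmono.injective) hfin
  obtain ⟨n, ⟨hn2, hnG⟩, hmin⟩ :
      ∃ n, (2 ≤ n ∧ ¬ Good (n + 1)) ∧ ∀ m, m < n → ¬ (2 ≤ m ∧ ¬ Good (m + 1)) :=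
    ⟨Nat.find hterm, Nat.find_spec hterm, fun m hm => Nat.find_min hterm hm⟩
  -- minimality: Good i for 3 ≤ i ≤ n
  have hGoodi : ∀ i : ℕ, 3 ≤ i → i ≤ n → Good i := by
    intro i h3 hin
    by_contra hbad
    have h1 : i - 1 + 1 = i := by omega
    exact hmin (i - 1) (by omega) ⟨by omega, by rw [h1]; exact hbad⟩
  have hNT : Odd (n + 1) → ¬ ∃ d, LowerNbr T (f n) d :=
    fun ho hex => hnG (Or.inl ⟨ho, hex⟩)
  have hNS : ¬ Odd (n + 1) → ¬ ∃ d, LowerNbr S (f n) d :=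
    fun he hex => hnG (Or.inr ⟨he, hex⟩)
  refine ⟨n, hn2, f, rfl, rfl, rfl, ?_, ?_, ?_, ?_⟩
  · -- step conditions
    intro i h3 hin
    obtain ⟨j, rfl⟩ : ∃ j, i = j + 3 := ⟨i - 3, by omega⟩
    have hg := hGoodi (j + 3) (by omega) hin
    have hs := step j hg
    exact ⟨fun h => hs.1 h, fun h => hs.2 (Nat.not_odd_iff_even.mpr h)⟩
  · exact fun h => hNT h
  · exact fun h => hNS (Nat.not_odd_iff_even.mpr h)
  · -- TSTop
    rcases Nat.even_or_odd n with hev | hod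
    · -- n even: n+1 odd, no upper T-neighbor
      have hodd1 : Odd (n + 1) := Even.add_one hev
      have hlt : ∃ d, LowerNbr T d (f n) := by
        rcases exists_nbr hT hP (f n) with h | h
        · exact absurd h (hNT hodd1)
        · exact h
      have hls : ∃ d, LowerNbr S d (f n) := by
        rcases eq_or_lt_of_le hn2 with h2 | h4
        · exact ⟨c, by rw [← h2]; exact ⟨hcb, hScb⟩⟩
        · have h4' : 4 ≤ n := by
            rcases hev with ⟨m, hm⟩
            omega
          obtain ⟨j, rfl⟩ : ∃ j, n = j + 3 := ⟨n - 3, by omega⟩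
          have hg := hGoodi (j + 3) (by omega) le_rfl
          exact ⟨f (j + 2), (step j hg).2 (Nat.not_odd_iff_even.mpr hev)⟩
      exact ⟨hlt, hls⟩
    · -- n odd: n ≥ 3, lower T-neighbor from the last step; n+1 even, no upper S-neighbor
      have h3 : 3 ≤ n := by
        rcases hod with ⟨m, hm⟩
        omega
      have hev1 : ¬ Odd (n + 1) := Nat.not_odd_iff_even.mpr hod.add_one
      have hls : ∃ d, LowerNbr S d (f n) := by
        rcases exists_nbr hS hP (f n) with h | h
        · exact absurd h (hNS hev1)
        · exact h
      have hlt : ∃ d, LowerNbr T d (f n) := by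
        obtain ⟨j, rfl⟩ : ∃ j, n = j + 3 := ⟨n - 3, by omega⟩
        have hg := hGoodi (j + 3) (by omega) le_rfl
        exact ⟨f (j + 2), (step j hg).1 hod⟩
      exact ⟨hlt, hls⟩
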